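/- Let σ ∈ ℝ, σ ≠ 0, let c ∈ ℝ, and set ω₀ := 0 and ω₁(u,v) := 2·arctan(exp(((σ−σ⁻¹)/2)·u + ((σ+σ⁻¹)/2)·v + c)). Then the pair (ω₀, ω₁) satisfies the Bäcklund system for the hyperbolic sine-Gordon equation with parameter σ: ∂ω₁/∂v − ∂ω₀/∂u = (σ·sin(ω₁+ω₀) + σ⁻¹·sin(ω₁−ω₀))/2 and ∂ω₁/∂u − ∂ω₀/∂v = (σ·sin(ω₁+ω₀) − σ⁻¹·sin(ω₁−ω₀))/2 at every point of ℝ². -/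

import Mathlib

/-!
With `ω₀ = 0` the Bäcklund system says `∂ᵥω₁ = ((σ + σ⁻¹)/2) sin ω₁` and
`∂ᵤω₁ = ((σ - σ⁻¹)/2) sin ω₁`. A plane wave `φ(a u + b v + c)` satisfies both as soon as its
profile solves the pendulum equation `φ' = sin φ` and `(a, b) = ((σ - σ⁻¹)/2, (σ + σ⁻¹)/2)`;
the kink `φ(s) = 2 arctan (exp s)` is such a profile, because `sin (2 arctan x) = 2x / (1 + x²)`
is exactly the derivative of `2 arctan (exp s)` at `x = exp s`.
-/

/-- Partial derivative with respect to the first variable `u`. -/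
noncomputable def pdu (f : ℝ × ℝ → ℝ) (p : ℝ × ℝ) : ℝ :=
  deriv (fun u => f (u, p.2)) p.1

/-- Partial derivative with respect to the second variable `v`. -/
noncomputable def pdv (f : ℝ × ℝ → ℝ) (p : ℝ × ℝ) : ℝ :=
  deriv (fun v => f (p.1, v)) p.2

/-- The pair `(ω₀, ω₁)` is related by the Bäcklund transformation for the
hyperbolic sine-Gordon equation with parameter `σ`. -/
def BacklundSG (σ : ℝ) (ω₀ ω₁ : ℝ × ℝ → ℝ) : Prop :=
  ∀ p : ℝ × ℝ,
    pdv ω₁ p - pdu ω₀ p =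
      (σ * Real.sin (ω₁ p + ω₀ p) + σ⁻¹ * Real.sin (ω₁ p - ω₀ p)) / 2 ∧
    pdu ω₁ p - pdv ω₀ p =
      (σ * Real.sin (ω₁ p + ω₀ p) - σ⁻¹ * Real.sin (ω₁ p - ω₀ p)) / 2

open Real

theorem sin_two_mul_arctan (x : ℝ) : sin (2 * arctan x) = 2 * x / (1 + x ^ 2) := by
  have hpos : 0 < 1 + x ^ 2 := by positivity
  rw [sin_two_mul, sin_arctan, cos_arctan]
  field_simp
  rw [sq_sqrt hpos.le]

theorem hasDerivAt_two_mul_arctan_exp (s : ℝ) :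
    HasDerivAt (fun s => 2 * arctan (exp s)) (sin (2 * arctan (exp s))) s := by
  refine ((hasDerivAt_exp s).arctan.const_mul 2).congr_deriv ?_
  rw [sin_two_mul_arctan]
  ring

section PlaneWave

variable {φ : ℝ → ℝ} {d a b c : ℝ} {p : ℝ × ℝ}

theorem pdu_comp_affine (hφ : HasDerivAt φ d (a * p.1 + b * p.2 + c)) :
    pdu (fun q => φ (a * q.1 + b * q.2 + c)) p = a * d := by
  have hg : HasDerivAt (fun u => a * u + b * p.2 + c) a p.1 := by
    simpa using ((hasDerivAt_id' p.1).const_mul a).add_const (b * p.2) |>.add_const c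
  exact ((hφ.comp p.1 hg).congr_deriv (mul_comm _ _)).deriv

theorem pdv_comp_affine (hφ : HasDerivAt φ d (a * p.1 + b * p.2 + c)) :
    pdv (fun q => φ (a * q.1 + b * q.2 + c)) p = b * d := by
  have hg : HasDerivAt (fun v => a * p.1 + b * v + c) b p.2 := by
    simpa using ((hasDerivAt_id' p.2).const_mul b).const_add (a * p.1) |>.add_const c
  exact ((hφ.comp p.2 hg).congr_deriv (mul_comm _ _)).deriv

end PlaneWave

theorem backlundSG_zero_left_iff (σ : ℝ) (ω : ℝ × ℝ → ℝ) :
    BacklundSG σ (fun _ => 0) ω ↔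
      ∀ p, pdv ω p = (σ + σ⁻¹) / 2 * sin (ω p) ∧ pdu ω p = (σ - σ⁻¹) / 2 * sin (ω p) := by
  simp only [BacklundSG, pdu, pdv, deriv_const, add_zero, sub_zero]
  refine forall_congr' fun p => and_congr ?_ ?_ <;> constructor <;> intro h <;> linarith

theorem zero_one_soliton_Backlund_hyperbolic_sineGordon_general
    (σ : ℝ) (c : ℝ) (ω₀ ω₁ : ℝ × ℝ → ℝ)
    (hω₀ : ω₀ = fun _ : ℝ × ℝ => (0 : ℝ))
    (hω₁ : ω₁ = fun p : ℝ × ℝ =>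
      2 * Real.arctan (Real.exp ((σ - σ⁻¹) / 2 * p.1 + (σ + σ⁻¹) / 2 * p.2 + c))) :
    BacklundSG σ ω₀ ω₁ := by
  subst hω₀ hω₁
  refine (backlundSG_zero_left_iff σ _).2 fun p => ⟨?_, ?_⟩
  · exact pdv_comp_affine (hasDerivAt_two_mul_arctan_exp _)
  · exact pdu_comp_affine (hasDerivAt_two_mul_arctan_exp _)

/-- The 0-soliton `ω₀ = 0` and the 1-soliton
`ω₁(u,v) = 2·arctan(exp(((σ−σ⁻¹)/2)·u + ((σ+σ⁻¹)/2)·v + c))`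
satisfy the Bäcklund system for the hyperbolic sine-Gordon equation with parameter `σ`. -/
theorem zero_one_soliton_Backlund_hyperbolic_sineGordon
    (σ : ℝ) (hσ : σ ≠ 0) (c : ℝ) (ω₀ ω₁ : ℝ × ℝ → ℝ)
    (hω₀ : ω₀ = fun _ : ℝ × ℝ => (0 : ℝ))
    (hω₁ : ω₁ = fun p : ℝ × ℝ =>
      2 * Real.arctan (Real.exp ((σ - σ⁻¹) / 2 * p.1 + (σ + σ⁻¹) / 2 * p.2 + c))) :
    BacklundSG σ ω₀ ω₁ :=
  zero_one_soliton_Backlund_hyperbolic_sineGordon_general σ c ω₀ ω₁ hω₀ hω₁
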